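/- Let R_o > 0 and for 0 ≤ l ≤ R_o define S_o(l) = (2π − θ₀(l)) R_o² + l R_o sin(θ₀(l)/2) with θ₀(l) = 2 arccos(l/(2R_o)), and let the distance l have density f(l) = 2l/R_o² on [0, R_o]. Then ∫₀^{R_o} S_o(l) f(l) dl = (π + 3√3/4) R_o². -/

import Mathlib

open Real MeasureTheory

/-- For `0 ≤ l ≤ R_o`, let `S_o(l) = (2π − θ₀(l)) R_o² + l R_o sin(θ₀(l)/2)` with
`θ₀(l) = 2 arccos(l/(2R_o))`, and let `l` have density `f(l) = 2l/R_o²` on `[0, R_o]`.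
Then `∫₀^{R_o} S_o(l) f(l) dl = (π + 3√3/4) R_o²`. -/
theorem expected_union_area (R_o : ℝ) (hR : 0 < R_o) :
    ∫ l in (0 : ℝ)..R_o,
        ((2 * π - 2 * Real.arccos (l / (2 * R_o))) * R_o ^ 2
            + l * R_o * Real.sin (2 * Real.arccos (l / (2 * R_o)) / 2))
          * (2 * l / R_o ^ 2)
      = (π + 3 * Real.sqrt 3 / 4) * R_o ^ 2 := by
  have hR0 : R_o ≠ 0 := hR.ne'
  have h2R : (0:ℝ) < 2 * R_o := by linarith
  set F : ℝ → ℝ := fun l =>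
    2 * π * l ^ 2 - 2 * l ^ 2 * Real.arccos (l / (2 * R_o))
      - 2 * R_o ^ 2 * Real.arcsin (l / (2 * R_o))
      + l * (2 * R_o ^ 2 + l ^ 2) * Real.sqrt (4 * R_o ^ 2 - l ^ 2) / (4 * R_o ^ 2)
    with hFdef
  have hder : ∀ l ∈ Set.uIcc (0:ℝ) R_o,
      HasDerivAt F
        (((2 * π - 2 * Real.arccos (l / (2 * R_o))) * R_o ^ 2
            + l * R_o * Real.sin (2 * Real.arccos (l / (2 * R_o)) / 2))
          * (2 * l / R_o ^ 2)) l := by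
    intro l hl
    rw [Set.uIcc_of_le hR.le] at hl
    obtain ⟨hl0, hl1⟩ := hl
    have hq : 0 < 4 * R_o ^ 2 - l ^ 2 := by nlinarith
    have hx1 : l / (2 * R_o) ≠ 1 := by
      intro h
      rw [div_eq_one_iff_eq h2R.ne'] at h
      nlinarith
    have hxm1 : l / (2 * R_o) ≠ -1 := by
      intro h
      rw [div_eq_iff h2R.ne'] at h
      nlinarith
    have hu : HasDerivAt (fun l : ℝ => l / (2 * R_o)) (1 / (2 * R_o)) l := by
      simpa using (hasDerivAt_id l).div_const (2 * R_o)
    have hA : HasDerivAt (fun l : ℝ => Real.arccos (l / (2 * R_o)))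
        (-(1 / Real.sqrt (1 - (l / (2 * R_o)) ^ 2)) * (1 / (2 * R_o))) l :=
      by have := (Real.hasDerivAt_arccos hxm1 hx1).comp l hu; exact this
    have hAs : HasDerivAt (fun l : ℝ => Real.arcsin (l / (2 * R_o)))
        ((1 / Real.sqrt (1 - (l / (2 * R_o)) ^ 2)) * (1 / (2 * R_o))) l :=
      by have := (Real.hasDerivAt_arcsin hxm1 hx1).comp l hu; exact this
    have hqd : HasDerivAt (fun l : ℝ => 4 * R_o ^ 2 - l ^ 2) (-(2 * l ^ 1)) l := by
      simpa using (hasDerivAt_pow 2 l).const_sub (4 * R_o ^ 2)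
    have hs : HasDerivAt (fun l : ℝ => Real.sqrt (4 * R_o ^ 2 - l ^ 2))
        (1 / (2 * Real.sqrt (4 * R_o ^ 2 - l ^ 2)) * (-(2 * l ^ 1))) l :=
      (Real.hasDerivAt_sqrt hq.ne').comp l hqd
    have t1 : HasDerivAt (fun l : ℝ => 2 * π * l ^ 2) (2 * π * (2 * l ^ 1)) l :=
      (hasDerivAt_pow 2 l).const_mul (2 * π)
    have h2a : HasDerivAt (fun l : ℝ => 2 * l ^ 2) (2 * (2 * l ^ 1)) l :=
      (hasDerivAt_pow 2 l).const_mul 2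
    have t2 := h2a.mul hA
    have t3 := hAs.const_mul (2 * R_o ^ 2)
    have hp : HasDerivAt (fun l : ℝ => l * (2 * R_o ^ 2 + l ^ 2))
        (1 * (2 * R_o ^ 2 + l ^ 2) + l * (2 * l ^ 1)) l :=
      (hasDerivAt_id l).mul ((hasDerivAt_pow 2 l).const_add (2 * R_o ^ 2))
    have t4 := (hp.mul hs).div_const (4 * R_o ^ 2)
    have H := ((t1.sub t2).sub t3).add t4
    convert H using 1
    · rfl
    · rfl
    · rfl
    have hsq1 : Real.sqrt (1 - (l / (2 * R_o)) ^ 2)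
        = Real.sqrt (4 * R_o ^ 2 - l ^ 2) / (2 * R_o) := by
      have key : 1 - (l / (2 * R_o)) ^ 2 = (4 * R_o ^ 2 - l ^ 2) / (2 * R_o) ^ 2 := by
        field_simp; ring
      rw [key, Real.sqrt_div hq.le _, Real.sqrt_sq h2R.le]
    set s := Real.sqrt (4 * R_o ^ 2 - l ^ 2) with hsdef
    have hs0 : s > 0 := Real.sqrt_pos.mpr hq
    have hs2 : s ^ 2 = 4 * R_o ^ 2 - l ^ 2 := Real.sq_sqrt hq.le
    have h22 : 2 * Real.arccos (l / (2 * R_o)) / 2 = Real.arccos (l / (2 * R_o)) := by ring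
    rw [h22, Real.sin_arccos, hsq1]
    field_simp
    linear_combination (l ^ 2 - 2 * R_o ^ 2) * hs2
  have hint : IntervalIntegrable (fun l =>
      ((2 * π - 2 * Real.arccos (l / (2 * R_o))) * R_o ^ 2
          + l * R_o * Real.sin (2 * Real.arccos (l / (2 * R_o)) / 2))
        * (2 * l / R_o ^ 2)) volume 0 R_o := by
    apply Continuous.intervalIntegrable
    have hc : Continuous fun l : ℝ => Real.arccos (l / (2 * R_o)) :=
      Real.continuous_arccos.comp (continuous_id.div_const _)
    exact (((continuous_const.sub (continuous_const.mul hc)).mul continuous_const).add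
      ((continuous_id.mul continuous_const).mul
        (Real.continuous_sin.comp ((continuous_const.mul hc).div_const 2)))).mul
      ((continuous_const.mul continuous_id).div_const _)
  rw [intervalIntegral.integral_eq_sub_of_hasDerivAt hder hint]
  have harccos : Real.arccos (R_o / (2 * R_o)) = π / 3 := by
    rw [show R_o / (2 * R_o) = 1/2 by field_simp,
      show (1:ℝ)/2 = Real.cos (π/3) by rw [Real.cos_pi_div_three],
      Real.arccos_cos (by positivity) (by linarith [Real.pi_pos])]
  have harcsin : Real.arcsin (R_o / (2 * R_o)) = π / 6 := by
    rw [show R_o / (2 * R_o) = 1/2 by field_simp,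
      show (1:ℝ)/2 = Real.sin (π/6) by rw [Real.sin_pi_div_six],
      Real.arcsin_sin (by linarith [Real.pi_pos]) (by linarith [Real.pi_pos])]
  have hsq3 : Real.sqrt (4 * R_o ^ 2 - R_o ^ 2) = Real.sqrt 3 * R_o := by
    rw [show 4 * R_o ^ 2 - R_o ^ 2 = 3 * R_o ^ 2 by ring, Real.sqrt_mul (by norm_num),
      Real.sqrt_sq hR.le]
  simp only [hFdef, harccos, harcsin, hsq3]
  rw [show (0:ℝ) / (2 * R_o) = 0 by simp]
  simp [Real.arcsin_zero, Real.arccos_zero]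
  field_simp
  ring
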